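/- For every nonnegative integer n, positive integer p, nonzero constant a, and x > 0, x^{nλ} · ((x^{1−λ} d/dx)^n applied to e^{a x^p})(x) = p^n · Bel_{n,λ/p}(a x^p) · e^{a x^p}. -/

import Mathlib

open Finset

/-- Degenerate falling factorial `(x)_{n,λ}`. -/
noncomputable def degFall (lam x : ℝ) (n : ℕ) : ℝ := ∏ i ∈ Finset.range n, (x - i * lam)

/-- Degenerate Bell polynomial `Bel_{n,μ}(y) = e^{-y} ∑_{k≥0} (k)_{n,μ} y^k / k!`. -/
noncomputable def Bel (mu y : ℝ) (n : ℕ) : ℝ :=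
  Real.exp (-y) * ∑' k : ℕ, degFall mu (k : ℝ) n * y ^ k / (Nat.factorial k)

/-- The operator `f ↦ (x ↦ x^{1-λ} f'(x))`. -/
noncomputable def Lop (lam : ℝ) (f : ℝ → ℝ) : ℝ → ℝ := fun x => x ^ ((1 : ℝ) - lam) * deriv f x

/-!
Put `μ = λ / p` and `S_n(y) = ∑ₖ (k)_{n,μ} yᵏ / k!`, so that `Bel_{n,μ}(y) = e^{-y} S_n(y)` and
`S_0 = exp`. The Euler operator `y d/dy` multiplies the `k`-th coefficient of an exponential
generating function by `k`, and `(k)_{n+1,μ} = (k)_{n,μ} (k - nμ)`, hence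
`S_{n+1}(y) = y S_n'(y) - nμ S_n(y)`. Applying `x^{1-λ} d/dx` to `p^n x^{-nλ} S_n(a x^p)` gives
`p^n x^{-(n+1)λ} (-nλ S_n(y) + p y S_n'(y))` with `y = a x^p`, which is
`p^{n+1} x^{-(n+1)λ} S_{n+1}(y)` because `λ = pμ`. By induction the `n`-th iterate is
`p^n x^{-nλ} S_n(a x^p)` on `x > 0`.
-/

open Filter Topology
open scoped Nat

noncomputable def egf (c : ℕ → ℝ) (y : ℝ) : ℝ := ∑' k : ℕ, c k * y ^ k / k !

def EgfSummable (c : ℕ → ℝ) : Prop := ∀ y : ℝ, Summable fun k : ℕ => c k * y ^ k / k !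

lemma egf_one : egf (fun _ => 1) = Real.exp := by
  ext y
  simp [egf, Real.exp_eq_exp_ℝ, NormedSpace.exp_eq_tsum_div]

lemma egfSummable_one : EgfSummable fun _ => 1 := by
  simpa [EgfSummable] using Real.summable_pow_div_factorial

namespace EgfSummable

variable {c : ℕ → ℝ}

lemma summable_abs (hc : EgfSummable c) (y : ℝ) : Summable fun k : ℕ => |c k| * |y| ^ k / k ! := by
  simpa [abs_mul, abs_div, abs_pow] using (hc |y|).abs

lemma natCast_mul (hc : EgfSummable c) : EgfSummable fun k => k * c k := by
  intro y
  -- `k |y| ^ k ≤ |2 y| ^ k`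
  refine (hc.summable_abs (2 * y)).of_norm_bounded fun k => ?_
  have hk : (k : ℝ) ≤ 2 ^ k := by exact_mod_cast Nat.lt_two_pow_self.le
  rw [Real.norm_eq_abs, abs_div, abs_mul, abs_mul, abs_pow, abs_mul, mul_pow, Nat.abs_cast,
    Nat.abs_cast, abs_two]
  refine div_le_div_of_nonneg_right ?_ (by positivity)
  calc (k : ℝ) * |c k| * |y| ^ k ≤ 2 ^ k * |c k| * |y| ^ k := by gcongr
    _ = _ := by ring

lemma mul_natCast_sub (hc : EgfSummable c) (t : ℝ) : EgfSummable fun k => c k * (k - t) :=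
  fun y => ((hc.natCast_mul y).sub ((hc y).mul_left t)).congr fun k => by ring

lemma hasDerivAt (hc : EgfSummable c) (y : ℝ) :
    HasDerivAt (egf c) (∑' k : ℕ, c k * (k * y ^ (k - 1)) / k !) y := by
  set R := |y| + 1
  have hR : 1 ≤ R := by simp [R]
  refine hasDerivAt_tsum_of_isPreconnected (g := fun k z => c k * z ^ k / k !)
    (hc.summable_abs (2 * R)) Metric.isOpen_ball
    (convex_ball 0 R).isPreconnected (fun k z _ => ((hasDerivAt_pow k z).const_mul _).div_const _)
    (fun k z hz => ?_) (Metric.mem_ball_self (by positivity)) (hc 0) (by simp [R])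
  rw [mem_ball_zero_iff, Real.norm_eq_abs] at hz
  have hk : (k : ℝ) ≤ 2 ^ k := by exact_mod_cast Nat.lt_two_pow_self.le
  rw [Real.norm_eq_abs, abs_div, abs_mul, abs_mul, abs_pow, Nat.abs_cast, Nat.abs_cast,
    abs_of_nonneg (by positivity : 0 ≤ 2 * R)]
  refine div_le_div_of_nonneg_right ?_ (by positivity)
  calc |c k| * (k * |z| ^ (k - 1)) ≤ |c k| * (k * R ^ k) := by
        gcongr
        exact (pow_le_pow_left₀ (abs_nonneg z) hz.le _).trans (pow_le_pow_right₀ hR (k.sub_le 1))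
    _ ≤ |c k| * (2 ^ k * R ^ k) := by gcongr
    _ = |c k| * (2 * R) ^ k := by rw [mul_pow]

lemma mul_deriv_egf (hc : EgfSummable c) (y : ℝ) :
    y * deriv (egf c) y = egf (fun k => k * c k) y := by
  rw [(hc.hasDerivAt y).deriv, egf, ← tsum_mul_left]
  congr 1 with k
  rcases k.eq_zero_or_pos with rfl | hk
  · simp
  · rw [← mul_pow_sub_one hk.ne' y]
    ring

lemma egf_mul_natCast_sub (hc : EgfSummable c) (t y : ℝ) :
    egf (fun k => c k * (k - t)) y = y * deriv (egf c) y - t * egf c y := by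
  rw [hc.mul_deriv_egf, egf, egf, egf, ← tsum_mul_left,
    ← (hc.natCast_mul y).tsum_sub ((hc y).mul_left t)]
  congr 1 with k
  ring

end EgfSummable

lemma degFall_succ (mu x : ℝ) (n : ℕ) : degFall mu x (n + 1) = degFall mu x n * (x - n * mu) :=
  prod_range_succ _ _

lemma egfSummable_degFall (mu : ℝ) (n : ℕ) : EgfSummable fun k => degFall mu k n := by
  induction n with
  | zero => simpa [degFall] using egfSummable_one
  | succ n ih => simpa only [degFall_succ] using ih.mul_natCast_sub (n * mu)

lemma egf_degFall_succ (mu : ℝ) (n : ℕ) (y : ℝ) :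
    egf (fun k => degFall mu k (n + 1)) y =
      y * deriv (egf fun k => degFall mu k n) y - n * mu * egf (fun k => degFall mu k n) y := by
  simp only [degFall_succ]
  exact (egfSummable_degFall mu n).egf_mul_natCast_sub _ y

lemma Lop_congr {lam z : ℝ} {f g : ℝ → ℝ} (h : f =ᶠ[𝓝 z] g) : Lop lam f z = Lop lam g z := by
  rw [Lop, Lop, h.deriv_eq]

lemma Lop_const_mul_rpow_mul_comp {lam z : ℝ} (hz : 0 < z) (C r a : ℝ) {p : ℕ} (hp : p ≠ 0)
    {S : ℝ → ℝ} (hS : DifferentiableAt ℝ S (a * z ^ p)) :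
    Lop lam (fun w => C * (w ^ r * S (a * w ^ p))) z =
      C * z ^ (r - lam) * (r * S (a * z ^ p) + p * (a * z ^ p * deriv S (a * z ^ p))) := by
  have hderiv : HasDerivAt (fun w => C * (w ^ r * S (a * w ^ p))) (C * (r * z ^ (r - 1) *
      S (a * z ^ p) + z ^ r * (deriv S (a * z ^ p) * (a * (p * z ^ (p - 1)))))) z :=
    ((Real.hasDerivAt_rpow_const (Or.inl hz.ne')).mul
      (hS.hasDerivAt.comp z ((hasDerivAt_pow p z).const_mul a))).const_mul C
  rw [Lop, hderiv.deriv]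
  have e1 : z ^ (1 - lam) * z ^ (r - 1) = z ^ (r - lam) := by
    rw [← Real.rpow_add hz]; ring_nf
  have e2 : z ^ (1 - lam) * z ^ r = z ^ (r - lam) * z := by
    rw [← Real.rpow_add hz, ← Real.rpow_add_one hz.ne']; ring_nf
  linear_combination (C * r * S (a * z ^ p)) * e1
    + (C * deriv S (a * z ^ p) * a * p * z ^ (p - 1)) * e2
    + (C * z ^ (r - lam) * deriv S (a * z ^ p) * a * p) * mul_pow_sub_one hp z

lemma Lop_iterate_exp_const_mul_pow (lam a : ℝ) {p : ℕ} (hp : 0 < p) (n : ℕ) {z : ℝ} (hz : 0 < z) :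
    (Lop lam)^[n] (fun y => Real.exp (a * y ^ p)) z =
      p ^ n * (z ^ (-(n * lam)) * egf (fun k => degFall (lam / p) k n) (a * z ^ p)) := by
  induction n generalizing z with
  | zero => simp [degFall, egf_one]
  | succ n ih =>
    have hev : (Lop lam)^[n] (fun y => Real.exp (a * y ^ p)) =ᶠ[𝓝 z]
        fun w => p ^ n * (w ^ (-(n * lam)) * egf (fun k => degFall (lam / p) k n) (a * w ^ p)) :=
      eventually_of_mem (Ioi_mem_nhds hz) fun w hw => ih hw
    rw [Function.iterate_succ_apply', Lop_congr hev, Lop_const_mul_rpow_mul_comp hz _ _ _ hp.ne'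
      ((egfSummable_degFall _ n).hasDerivAt _).differentiableAt, egf_degFall_succ]
    have hlam : lam = p * (lam / p) := (mul_div_cancel₀ _ (by positivity)).symm
    rw [show -(n * lam) - lam = -(((n + 1 : ℕ) : ℝ) * lam) by push_cast; ring]
    linear_combination (-p ^ n * z ^ (-(((n + 1 : ℕ) : ℝ) * lam)) * n *
      egf (fun k => degFall (lam / p) k n) (a * z ^ p)) * hlam

lemma Bel_eq_exp_neg_mul_egf (mu y : ℝ) (n : ℕ) :
    Bel mu y n = Real.exp (-y) * egf (fun k => degFall mu k n) y := rfl

theorem lop_iterate_exp_pow_general (lam a : ℝ) (p : ℕ) (hp : 0 < p)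
    (n : ℕ) (x : ℝ) (hx : 0 < x) :
    x ^ ((n : ℝ) * lam) * (Lop lam)^[n] (fun y => Real.exp (a * y ^ p)) x =
      (p : ℝ) ^ n * Bel (lam / p) (a * x ^ p) n * Real.exp (a * x ^ p) := by
  have hxpow : x ^ ((n : ℝ) * lam) ≠ 0 := by positivity
  rw [Lop_iterate_exp_const_mul_pow lam a hp n hx, Bel_eq_exp_neg_mul_egf, Real.rpow_neg hx.le,
    Real.exp_neg]
  field_simp

/-- `x^{nλ} ((x^{1−λ} d/dx)^n e^{a x^p})(x) = p^n Bel_{n,λ/p}(a x^p) e^{a x^p}`. -/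
theorem lop_iterate_exp_pow (lam a : ℝ) (ha : a ≠ 0) (p : ℕ) (hp : 0 < p)
    (n : ℕ) (x : ℝ) (hx : 0 < x) :
    x ^ ((n : ℝ) * lam) * (Lop lam)^[n] (fun y => Real.exp (a * y ^ p)) x =
      (p : ℝ) ^ n * Bel (lam / p) (a * x ^ p) n * Real.exp (a * x ^ p) :=
  lop_iterate_exp_pow_general lam a p hp n x hx
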